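/- Let (κᵢ) be a nonnegative real sequence, (wᵢ) a nonincreasing sequence in (0,1) with aₙ = Σ_{i=1}^n wᵢ → ∞, and suppose (1/n) Σ_{i=1}^n aᵢ κᵢ is bounded and Σ_{j=1}^∞ wⱼ κⱼ = S < ∞. Then (aₙ/n) Σ_{i=1}^n κᵢ is bounded. -/

import Mathlib

/-! Write `aₙ = ∑_{j<n} wⱼ`. For `i < n`, monotonicity of `w` gives
`aₙ - aᵢ₊₁ = ∑_{i<j<n} wⱼ ≤ n wᵢ`, so `aₙ ∑_{i<n} κᵢ ≤ ∑_{i<n} aᵢ₊₁ κᵢ + n ∑_{i<n} wᵢ κᵢ`.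
The first sum is at most `n C₁` by the Cesàro bound and the second at most `n S`;
dividing by `n` bounds `(aₙ / n) ∑_{i<n} κᵢ` by `C₁ + S`. -/

open Finset Filter

lemma Antitone.sum_Ico_succ_le_mul {w : ℕ → ℝ} (hw : Antitone w) {i : ℕ} (hwi : 0 ≤ w i)
    (n : ℕ) : ∑ j ∈ Ico (i + 1) n, w j ≤ n * w i := by
  calc ∑ j ∈ Ico (i + 1) n, w j
      ≤ #(Ico (i + 1) n) • w i :=
        sum_le_card_nsmul _ _ _ fun j hj => hw (by have := (mem_Ico.mp hj).1; omega)
    _ ≤ n * w i := by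
        rw [nsmul_eq_mul, Nat.card_Ico]
        exact mul_le_mul_of_nonneg_right (by exact_mod_cast Nat.sub_le n (i + 1)) hwi

lemma Antitone.sum_range_mul_le {w : ℕ → ℝ} (hw : Antitone w) (hw₀ : ∀ i, 0 ≤ w i)
    {κ : ℕ → ℝ} (hκ : ∀ i, 0 ≤ κ i) {i n : ℕ} (hin : i < n) :
    (∑ j ∈ range n, w j) * κ i ≤
      (∑ j ∈ range (i + 1), w j) * κ i + n * (w i * κ i) := by
  have htail : (∑ j ∈ range n, w j) - ∑ j ∈ range (i + 1), w j = ∑ j ∈ Ico (i + 1) n, w j := by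
    rw [← sum_range_add_sum_Ico w hin, add_sub_cancel_left]
  have := mul_le_mul_of_nonneg_right (htail ▸ hw.sum_Ico_succ_le_mul (hw₀ i) n) (hκ i)
  linarith

lemma Antitone.sum_range_mul_sum_range_le {w : ℕ → ℝ} (hw : Antitone w) (hw₀ : ∀ i, 0 ≤ w i)
    {κ : ℕ → ℝ} (hκ : ∀ i, 0 ≤ κ i) (n : ℕ) :
    (∑ j ∈ range n, w j) * ∑ i ∈ range n, κ i ≤
      ∑ i ∈ range n, (∑ j ∈ range (i + 1), w j) * κ i + n * ∑ i ∈ range n, w i * κ i := by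
  rw [mul_sum, mul_sum, ← sum_add_distrib]
  exact sum_le_sum fun i hi => hw.sum_range_mul_le hw₀ hκ (mem_range.mp hi)

theorem rate_lemma_bounded_general
    (w κ : ℕ → ℝ)
    (hw01 : ∀ i, w i ∈ Set.Ioo (0 : ℝ) 1)
    (hwmono : Antitone w)
    (hκ : ∀ i, 0 ≤ κ i)
    (a : ℕ → ℝ) (ha : ∀ n, a n = ∑ i ∈ Finset.range n, w i)
    (C₁ : ℝ)
    (hbdd : ∀ n : ℕ, (1 / (n : ℝ)) * ∑ i ∈ Finset.range n, a (i + 1) * κ i ≤ C₁)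
    (S : ℝ) (hS : HasSum (fun j => w j * κ j) S) :
    ∃ C : ℝ, ∀ n : ℕ, (a n / (n : ℝ)) * ∑ i ∈ Finset.range n, κ i ≤ C := by
  obtain rfl : a = fun n => ∑ i ∈ range n, w i := funext ha
  have hw₀ : ∀ i, 0 ≤ w i := fun i => (hw01 i).1.le
  refine ⟨C₁ + S, fun n => ?_⟩
  rcases n.eq_zero_or_pos with rfl | hn
  · simpa using add_nonneg (by simpa using hbdd 0) (hS.nonneg fun j => mul_nonneg (hw₀ j) (hκ j))
  have hn' : (0 : ℝ) < n := by exact_mod_cast hn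
  have hcesaro := hbdd n
  rw [one_div, inv_mul_le_iff₀ hn'] at hcesaro
  have hpartial : ∑ i ∈ range n, w i * κ i ≤ S :=
    sum_le_hasSum _ (fun i _ => mul_nonneg (hw₀ i) (hκ i)) hS
  rw [div_mul_eq_mul_div, div_le_iff₀ hn']
  calc _ ≤ _ := hwmono.sum_range_mul_sum_range_le hw₀ hκ n
    _ ≤ n * C₁ + n * S := add_le_add hcesaro (mul_le_mul_of_nonneg_left hpartial hn'.le)
    _ = (C₁ + S) * n := by ring

theorem rate_lemma_bounded
    (w κ : ℕ → ℝ)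
    (hw01 : ∀ i, w i ∈ Set.Ioo (0 : ℝ) 1)
    (hwmono : Antitone w)
    (hκ : ∀ i, 0 ≤ κ i)
    (a : ℕ → ℝ) (ha : ∀ n, a n = ∑ i ∈ Finset.range n, w i)
    (ha_top : Tendsto a atTop atTop)
    (C₁ : ℝ)
    (hbdd : ∀ n : ℕ, (1 / (n : ℝ)) * ∑ i ∈ Finset.range n, a (i + 1) * κ i ≤ C₁)
    (S : ℝ) (hS : HasSum (fun j => w j * κ j) S) :
    ∃ C : ℝ, ∀ n : ℕ, (a n / (n : ℝ)) * ∑ i ∈ Finset.range n, κ i ≤ C :=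
  rate_lemma_bounded_general w κ hw01 hwmono hκ a ha C₁ hbdd S hS
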